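/- arXiv:1312.5050 — 3 statements merged into one kernel-verified Lean document; each statement's English description precedes it below -/
import Mathlib

section
/- Let n ≥ 1, let a : Fin n → ℕ be a count vector with total sum w = ∑_j a_j satisfying w ≥ 1, and let k : Fin n be a coordinate with a_k = 0. Let e_k denote the unit count vector with value 1 at position k and 0 elsewhere. Then the Shannon entropy of the updated vector a + e_k satisfies the exact identity H(a + e_k) = (w/(w+1)) · H(a) − (w/(w+1)) · ln(w/(w+1)) − (1/(w+1)) · ln(1/(w+1)). (This is the key computational identity in the proof of the paper's Proposition 2, describing how IP entropy changes when an incremental view is for a previously unwatched video.) -/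
open Real Finset

/-- Shannon entropy of a count vector `a : Fin n → ℕ` with total sum `∑ i, a i`:
`H(a) = -∑ j, (a j / w) * ln (a j / w)` where `w = ∑ i, a i`.
(Terms with `a j = 0` contribute `0` since `Real.log 0 = 0`.) -/
noncomputable def countEntropy {n : ℕ} (a : Fin n → ℕ) : ℝ :=
  -∑ j, ((a j : ℝ) / (∑ i, a i : ℕ)) * Real.log ((a j : ℝ) / (∑ i, a i : ℕ))

/-! The update `a ↦ a + eₖ` rescales the old frequencies by `w / (w + 1)` and adds a new
frequency `1 / (w + 1)`. Writing the entropy as `∑ negMulLog pⱼ`, the identity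
`negMulLog (x * y) = y * negMulLog x + x * negMulLog y` splits the rescaled part into
`(w / (w + 1)) H(a) + negMulLog (w / (w + 1))`, since the old frequencies sum to `1`. -/

theorem countEntropy_eq_sum_negMulLog {n : ℕ} (a : Fin n → ℕ) :
    countEntropy a = ∑ j, negMulLog ((a j : ℝ) / (∑ i, a i : ℕ)) := by
  simp only [countEntropy, negMulLog, neg_mul, sum_neg_distrib]

theorem Real.sum_negMulLog_const_mul {ι : Type*} (s : Finset ι) (t : ℝ) (p : ι → ℝ) :
    ∑ j ∈ s, negMulLog (t * p j) =
      t * ∑ j ∈ s, negMulLog (p j) + (∑ j ∈ s, p j) * negMulLog t := by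
  rw [mul_sum, sum_mul, ← sum_add_distrib]
  simp only [negMulLog_mul, add_comm]

theorem Fintype.sum_comp_add_single {ι M : Type*} [Fintype ι] [DecidableEq ι] [AddCommMonoid M]
    (φ : ℕ → M) (hφ : φ 0 = 0) (a : ι → ℕ) {k : ι} (hk : a k = 0) :
    ∑ j, φ ((a + Pi.single k 1 : ι → ℕ) j) = ∑ j, φ (a j) + φ 1 := by
  have hpoint :
      ∀ j, φ ((a + Pi.single k 1 : ι → ℕ) j) = φ (a j) + (Pi.single k (φ 1) : ι → M) j := by
    intro j
    rcases eq_or_ne j k with rfl | hj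
    · simp [hk, hφ]
    · simp [hj]
  simp only [hpoint, sum_add_distrib, Finset.sum_pi_single', mem_univ, if_true]

theorem entropy_update_identity_general (n : ℕ) (a : Fin n → ℕ)
    (w : ℕ) (hw : w = ∑ j, a j) (hw1 : 1 ≤ w) (k : Fin n) (hk : a k = 0) :
    countEntropy (a + Pi.single k 1) =
      ((w : ℝ) / (w + 1)) * countEntropy a
        - ((w : ℝ) / (w + 1)) * Real.log ((w : ℝ) / (w + 1))
        - (1 / ((w : ℝ) + 1)) * Real.log (1 / ((w : ℝ) + 1)) := by
  have hw0 : (w : ℝ) ≠ 0 := Nat.cast_ne_zero.mpr (Nat.one_le_iff_ne_zero.mp hw1)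
  have htotal : ∑ j, (a + Pi.single k 1 : Fin n → ℕ) j = w + 1 := by
    simp [sum_add_distrib, hw]
  have hfreq : ∑ j, (a j : ℝ) / w = 1 := by
    rw [← sum_div, ← Nat.cast_sum, ← hw, div_self hw0]
  have hrescale : ∀ j, (a j : ℝ) / (w + 1) = w / (w + 1) * ((a j : ℝ) / w) := fun j => by
    field_simp
  rw [countEntropy_eq_sum_negMulLog, countEntropy_eq_sum_negMulLog, htotal, ← hw]
  push_cast
  rw [Fintype.sum_comp_add_single (fun m : ℕ => negMulLog ((m : ℝ) / (w + 1))) (by simp) a hk]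
  simp only [hrescale, Real.sum_negMulLog_const_mul, hfreq, Nat.cast_one]
  simp only [negMulLog]
  ring

/-- the exact update identity for the entropy when a previously
unwatched coordinate `k` (i.e. `a k = 0`) receives one additional view:
`H(a + e_k) = (w/(w+1)) H(a) - (w/(w+1)) ln (w/(w+1)) - (1/(w+1)) ln (1/(w+1))`. -/
theorem entropy_update_identity (n : ℕ) (hn : 1 ≤ n) (a : Fin n → ℕ)
    (w : ℕ) (hw : w = ∑ j, a j) (hw1 : 1 ≤ w) (k : Fin n) (hk : a k = 0) :
    countEntropy (a + Pi.single k 1) =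
      ((w : ℝ) / (w + 1)) * countEntropy a
        - ((w : ℝ) / (w + 1)) * Real.log ((w : ℝ) / (w + 1))
        - (1 / ((w : ℝ) + 1)) * Real.log (1 / ((w : ℝ) + 1)) :=
  entropy_update_identity_general n a w hw hw1 k hk
end

section
/- Let n ≥ 1, let a : Fin n → ℕ be a count vector with total sum w = ∑_j a_j satisfying w ≥ 1, and let k : Fin n be a coordinate with a_k = 0. Let e_k denote the unit count vector with value 1 at position k and 0 elsewhere. Then the increase in Shannon entropy satisfies the quantitative lower bound H(a + e_k) − H(a) ≥ ln((w+1)/w). (This is the quantitative estimate established in the proof of the paper's Proposition 2, obtained by combining the update identity for H(a + e_k) with the bound H(a) ≤ ln w.) -/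
/-!
With `S(a) = ∑ j, a j * log (a j)`, a count vector of total `w` has `w * H(a) = w * log w - S(a)`.
Raising a zero coordinate to `1` leaves `S` unchanged (`1 * log 1 = 0`), so
`(w + 1) * (H(a + e_k) - H(a) - log ((w + 1) / w)) = log w - H(a)`, which is `S(a) / w ≥ 0`
because natural counts have `m * log m ≥ 0`.
-/

open Real Finset

lemma natCast_mul_log_natCast_nonneg (m : ℕ) : 0 ≤ (m : ℝ) * log m := by
  rcases m.eq_zero_or_pos with rfl | hm
  · simp
  · exact mul_log_nonneg (by exact_mod_cast hm)

lemma mul_div_mul_log_div {x y : ℝ} (hy : y ≠ 0) :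
    y * (x / y * log (x / y)) = x * log x - x * log y := by
  rcases eq_or_ne x 0 with rfl | hx
  · simp
  · rw [log_div hx hy]
    field_simp

lemma natCast_sum_mul_countEntropy {n : ℕ} (a : Fin n → ℕ) :
    ((∑ i, a i : ℕ) : ℝ) * countEntropy a =
      ((∑ i, a i : ℕ) : ℝ) * log ((∑ i, a i : ℕ) : ℝ) - ∑ j, (a j : ℝ) * log (a j) := by
  rcases eq_or_ne ((∑ i, a i : ℕ) : ℝ) 0 with hW | hW
  · have ha : ∀ j, a j = 0 := by
      simpa [sum_eq_zero_iff] using Nat.cast_eq_zero.mp hW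
    simp [ha]
  · rw [countEntropy, mul_neg, mul_sum, sum_congr rfl fun j _ => mul_div_mul_log_div hW,
      sum_sub_distrib, ← sum_mul]
    push_cast
    ring

lemma countEntropy_le_log_sum {n : ℕ} (a : Fin n → ℕ) :
    countEntropy a ≤ log ((∑ i, a i : ℕ) : ℝ) := by
  rcases (∑ i, a i).eq_zero_or_pos with hW | hW
  · simp [countEntropy, hW]
  · have hWpos : (0 : ℝ) < (∑ i, a i : ℕ) := by exact_mod_cast hW
    have hS : 0 ≤ ∑ j, (a j : ℝ) * log (a j) :=
      sum_nonneg fun j _ => natCast_mul_log_natCast_nonneg (a j)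
    refine le_of_mul_le_mul_left ?_ hWpos
    linarith [natCast_sum_mul_countEntropy a]

lemma sum_mul_log_add_single {n : ℕ} (a : Fin n → ℕ) {k : Fin n} (hk : a k = 0) :
    ∑ j, ((a + Pi.single k 1 : Fin n → ℕ) j : ℝ) * log ((a + Pi.single k 1 : Fin n → ℕ) j) =
      ∑ j, (a j : ℝ) * log (a j) := by
  refine sum_congr rfl fun j _ => ?_
  rcases eq_or_ne j k with rfl | hj
  · simp [hk]
  · simp [hj]

lemma countEntropy_add_single {n : ℕ} (a : Fin n → ℕ) {k : Fin n} (hk : a k = 0) {w : ℕ}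
    (hw : ∑ i, a i = w) :
    ((w : ℝ) + 1) * countEntropy (a + Pi.single k 1) =
      w * countEntropy a + ((w : ℝ) + 1) * log ((w : ℝ) + 1) - w * log w := by
  have hsum : ∑ i, (a + Pi.single k 1 : Fin n → ℕ) i = w + 1 := by
    simp [sum_add_distrib, hw]
  have hb := natCast_sum_mul_countEntropy (a + Pi.single k 1)
  rw [hsum, sum_mul_log_add_single a hk, Nat.cast_add_one] at hb
  linarith [hw ▸ natCast_sum_mul_countEntropy a]

theorem entropy_increase_lower_bound_general (n : ℕ) (a : Fin n → ℕ)
    (w : ℕ) (hw : w = ∑ j, a j) (hw1 : 1 ≤ w) (k : Fin n) (hk : a k = 0) :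
    countEntropy (a + Pi.single k 1) - countEntropy a ≥
      Real.log (((w : ℝ) + 1) / w) := by
  have hwpos : (0 : ℝ) < w := Nat.cast_pos.mpr hw1
  have hupdate := countEntropy_add_single a hk hw.symm
  have hbound : countEntropy a ≤ log w := hw ▸ countEntropy_le_log_sum a
  have key : ((w : ℝ) + 1) * (countEntropy (a + Pi.single k 1) - countEntropy a -
      (log ((w : ℝ) + 1) - log w)) = log w - countEntropy a := by
    linear_combination hupdate
  rw [ge_iff_le, log_div (by positivity) hwpos.ne', ← sub_nonneg]
  refine (mul_nonneg_iff_of_pos_left (by positivity : (0 : ℝ) < w + 1)).mp ?_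
  rw [key]
  linarith

/-- when a previously unwatched coordinate `k` (i.e. `a k = 0`)
receives one additional view, the entropy increases by at least
`ln ((w+1)/w)`. -/
theorem entropy_increase_lower_bound (n : ℕ) (hn : 1 ≤ n) (a : Fin n → ℕ)
    (w : ℕ) (hw : w = ∑ j, a j) (hw1 : 1 ≤ w) (k : Fin n) (hk : a k = 0) :
    countEntropy (a + Pi.single k 1) - countEntropy a ≥
      Real.log (((w : ℝ) + 1) / w) :=
  entropy_increase_lower_bound_general n a w hw hw1 k hk
end

section
/- Let n ≥ 1, let a : Fin n → ℕ be a count vector with total sum w = ∑_j a_j satisfying w ≥ 1, and let k : Fin n be a coordinate with a_k = 0. Let e_k denote the unit count vector with value 1 at position k and 0 elsewhere. Then H(a + e_k) > H(a), i.e. the Shannon entropy strictly increases. (This is the paper's Proposition 2: as an IP's view count increases, whenever the incremental view is for a previously unwatched video — so that it increases the number of watched videos — the IP entropy strictly increases.) -/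
/-!
Writing `W = ∑ a` and `S = ∑ a_j log a_j`, one has `H(a) = log W - S / W`. A new unit at an
empty coordinate adds the term `1 · log 1 = 0` to `S` and raises `W` to `W + 1`; so `log W`
strictly increases while `-S / W` cannot decrease, because `S ≥ 0`.
-/

open Real Finset

theorem countEntropy_eq_log_sub {n : ℕ} (a : Fin n → ℕ) (ha : ∑ i, a i ≠ 0) :
    countEntropy a =
      log (∑ i, a i : ℕ) - (∑ j, (a j : ℝ) * log (a j)) / (∑ i, a i : ℕ) := by
  set W : ℝ := ((∑ i, a i : ℕ) : ℝ)
  have hW : W ≠ 0 := Nat.cast_ne_zero.mpr ha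
  have hWsum : ∑ j, (a j : ℝ) = W := by push_cast [W]; rfl
  have hterm (j : Fin n) :
      (a j : ℝ) / W * log ((a j : ℝ) / W) =
        (a j : ℝ) * log (a j) / W - (a j : ℝ) / W * log W := by
    rcases eq_or_ne (a j) 0 with hj | hj
    · simp [hj]
    · rw [log_div (by exact_mod_cast hj) hW]
      ring
  rw [countEntropy, sum_congr rfl fun j _ => hterm j, sum_sub_distrib, ← sum_div, ← sum_mul,
    ← sum_div, hWsum, div_self hW]
  ring

theorem sum_add_single_one {n : ℕ} (a : Fin n → ℕ) (k : Fin n) :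
    ∑ j, (a + Pi.single k 1 : Fin n → ℕ) j = ∑ j, a j + 1 := by
  simp [sum_add_distrib]

theorem sum_mul_log_add_single_one {n : ℕ} {a : Fin n → ℕ} {k : Fin n} (hk : a k = 0) :
    ∑ j, ((a + Pi.single k 1 : Fin n → ℕ) j : ℝ) *
        log ((a + Pi.single k 1 : Fin n → ℕ) j) = ∑ j, (a j : ℝ) * log (a j) := by
  refine sum_congr rfl fun j _ => ?_
  rcases eq_or_ne j k with rfl | hj
  · simp [hk]
  · simp [hj]

theorem sum_mul_log_natCast_nonneg {n : ℕ} (a : Fin n → ℕ) :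
    0 ≤ ∑ j, (a j : ℝ) * log (a j) :=
  sum_nonneg fun _ _ => mul_nonneg (Nat.cast_nonneg _) (log_natCast_nonneg _)

theorem log_sub_div_lt_log_add_one_sub_div {S W : ℝ} (hS : 0 ≤ S) (hW : 0 < W) :
    log W - S / W < log (W + 1) - S / (W + 1) := by
  have hlog : log W < log (W + 1) := log_lt_log hW (lt_add_one W)
  have hdiv : S / (W + 1) ≤ S / W :=
    div_le_div_of_nonneg_left hS hW (le_add_of_nonneg_right zero_le_one)
  linarith

theorem entropy_strict_increase_general (n : ℕ) (a : Fin n → ℕ)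
    (w : ℕ) (hw : w = ∑ j, a j) (hw1 : 1 ≤ w) (k : Fin n) (hk : a k = 0) :
    countEntropy (a + Pi.single k 1) > countEntropy a := by
  have hsum : ∑ j, (a + Pi.single k 1 : Fin n → ℕ) j = w + 1 := by rw [sum_add_single_one, hw]
  rw [countEntropy_eq_log_sub a (by omega), countEntropy_eq_log_sub _ (by omega),
    sum_mul_log_add_single_one hk, hsum, ← hw, Nat.cast_add_one]
  exact log_sub_div_lt_log_add_one_sub_div (sum_mul_log_natCast_nonneg a) (by exact_mod_cast hw1)

/-- Proposition 2: when an incremental view goes to a previously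
unwatched coordinate `k` (i.e. `a k = 0`), the entropy strictly increases. -/
theorem entropy_strict_increase (n : ℕ) (hn : 1 ≤ n) (a : Fin n → ℕ)
    (w : ℕ) (hw : w = ∑ j, a j) (hw1 : 1 ≤ w) (k : Fin n) (hk : a k = 0) :
    countEntropy (a + Pi.single k 1) > countEntropy a :=
  entropy_strict_increase_general n a w hw hw1 k hk
end
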